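/- arXiv:1601.07988 — 5 statements merged into one kernel-verified Lean document; each statement's English description precedes it below -/
import Mathlib

section
/- Let n ≥ 1 and L = w_1⋯w_{2n} ∈ 𝓛_n. Then the number of P1-matches in L equals the number of east steps of L that lie below the subdiagonal y = x − 1, i.e., the number of indices j with w_j = E such that the number of E's in w_1⋯w_j exceeds the number of N's in w_1⋯w_j by at least 2. By symmetry, the number of P6-matches in L equals the number of north steps of L above the superdiagonal y = x + 1, i.e., the number of indices j with w_j = N such that the number of N's in w_1⋯w_j exceeds the number of E's in w_1⋯w_j by at least 2. -/
/-!
Words over the alphabet {E, N} are encoded as `List Bool`,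
with `true` representing an east step `E` and `false` a north step `N`.
The word `w = w_1 ⋯ w_{2n}` corresponds to the lattice path from `(0,0)` to
`(n,n)` whose `j`-th step is east if `w_j = true` and north if `w_j = false`.
-/

/-- `w ∈ 𝓛_n`: the word `w` has exactly `n` `E`'s and `n` `N`'s. -/
def memL (n : ℕ) (w : List Bool) : Prop :=
  w.count true = n ∧ w.count false = n

/-- The (0-indexed, increasing) list of positions at which the letter `b` occurs in `w`. -/
def occPos (w : List Bool) (b : Bool) : List ℕ :=
  (List.range w.length).filter (fun j => w.getD j (!b) == b)

/-- `ps_w({i, i+1})` (with `i` 1-indexed): the length-4 word obtained from `w` by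
deleting, for each `j ∉ {i, i+1}`, the `j`-th occurrence of `E` and the `j`-th
occurrence of `N` (counted from left to right); i.e. the word formed by the
`i`-th and `(i+1)`-th occurrences of `E` and of `N`, read in their original order. -/
def pairedSubword (w : List Bool) (i : ℕ) : List Bool :=
  let keep : List ℕ := [(occPos w true).getD (i-1) 0, (occPos w true).getD i 0,
                        (occPos w false).getD (i-1) 0, (occPos w false).getD i 0]
  ((List.range w.length).filter (fun j => keep.contains j)).map (fun j => w.getD j true)

/-- `P`-mch(w): the number of paired steps `i` with `1 ≤ i ≤ n-1` at which the
paired pattern `P` matches in `w ∈ 𝓛_n`. -/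
def pmch (n : ℕ) (P w : List Bool) : ℕ :=
  ((Finset.Icc 1 (n-1)).filter (fun i => pairedSubword w i = P)).card

def P1 : List Bool := [true, true, false, false]   -- EENN
def P2 : List Bool := [true, false, true, false]   -- ENEN
def P3 : List Bool := [false, true, true, false]   -- NEEN
def P4 : List Bool := [true, false, false, true]   -- ENNE
def P5 : List Bool := [false, true, false, true]   -- NENE
def P6 : List Bool := [false, false, true, true]   -- NNEE

/-- The number of east steps of `w` lying below the subdiagonal `y = x - 1`:
indices `j` with `w_j = E` such that the number of `E`'s in `w_1 ⋯ w_j` exceeds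
the number of `N`'s in `w_1 ⋯ w_j` by at least `2`. -/
def eastBelow (w : List Bool) : ℕ :=
  ((Finset.range w.length).filter (fun j =>
    w.getD j false = true ∧ (w.take (j+1)).count false + 2 ≤ (w.take (j+1)).count true)).card

/-- The number of north steps of `w` lying above the superdiagonal `y = x + 1`. -/
def northAbove (w : List Bool) : ℕ :=
  ((Finset.range w.length).filter (fun j =>
    w.getD j true = false ∧ (w.take (j+1)).count true + 2 ≤ (w.take (j+1)).count false)).card


/-!
Let `e_k`, `f_k` be the positions of the `(k+1)`-th `E` and `N`. As `e_{i-1} < e_i` and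
`f_{i-1} < f_i`, the paired subword at `i` is `EENN` iff `e_i < f_{i-1}`, i.e. iff at most
`i - 1` letters `N` precede the `(i+1)`-th `E`, i.e. iff that east step lies below `y = x - 1`.
So `i ↦ e_i` is a bijection from the `P1`-matches onto those east steps; `P6` is the same
argument with the letters exchanged. The basic tool throughout: occurrence `k` of `b` (from 0)
comes before position `t` iff more than `k` letters `b` occur among the first `t`.
-/

lemma List.Pairwise.rel_of_map_eq_append {α β : Type*} {r : α → α → Prop} {K : List α}
    {g : α → β} {u v : List β} (hK : K.Pairwise r) (hmap : K.map g = u ++ v) {x y : α}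
    (hx : x ∈ K) (hy : y ∈ K) (hgx : g x ∉ v) (hgy : g y ∉ u) : r x y := by
  obtain ⟨K₁, K₂, rfl, rfl, rfl⟩ := List.map_eq_append_iff.1 hmap
  have hx₁ : x ∈ K₁ := (List.mem_append.1 hx).resolve_right fun h => hgx (List.mem_map_of_mem h)
  have hy₂ : y ∈ K₂ := (List.mem_append.1 hy).resolve_left fun h => hgy (List.mem_map_of_mem h)
  exact (List.pairwise_append.1 hK).2.2 x hx₁ y hy₂

lemma List.range_filter_eq_of_pairwise {L : ℕ} {p : ℕ → Bool} {l : List ℕ}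
    (hl : l.Pairwise (· < ·)) (hmem : ∀ x, x ∈ l ↔ x < L ∧ p x) :
    (List.range L).filter p = l := by
  have hsorted := List.pairwise_lt_range (n := L) |>.filter p
  refine List.Perm.eq_of_pairwise (fun _ _ _ _ h h' => (lt_asymm h h').elim) hsorted hl ?_
  refine (List.perm_ext_iff_of_nodup hsorted.nodup hl.nodup).2 fun x => ?_
  simp [hmem]

-- 0-indexed: the paper's `i`-th occurrence of `b` is `occ w b (i - 1)`.
def occ (w : List Bool) (b : Bool) (k : ℕ) : ℕ := (occPos w b).getD k 0

lemma occPos_cons (a : Bool) (w : List Bool) (b : Bool) :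
    occPos (a :: w) b =
      if a = b then 0 :: (occPos w b).map (· + 1) else (occPos w b).map (· + 1) := by
  rw [occPos, List.length_cons, List.range_succ_eq_map, List.filter_cons, List.filter_map]
  have : (fun j => (a :: w).getD j (!b) == b) ∘ Nat.succ = fun j => w.getD j (!b) == b := rfl
  rw [this, ← occPos]
  cases a <;> cases b <;> simp

lemma length_occPos (w : List Bool) (b : Bool) : (occPos w b).length = w.count b := by
  induction w with
  | nil => rfl
  | cons a w ih => rw [occPos_cons, List.count_cons]; split_ifs <;> simp_all

lemma occPos_getElem_lt_iff {w : List Bool} {b : Bool} {k t : ℕ} (hk : k < (occPos w b).length) :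
    (occPos w b)[k] < t ↔ k < (w.take t).count b := by
  induction w generalizing k t with
  | nil => simp [occPos] at hk
  | cons a w ih =>
    rcases t with _ | t
    · simp
    simp only [occPos_cons] at hk ⊢
    rw [List.take_succ_cons, List.count_cons]
    by_cases hab : a = b
    · subst hab
      rcases k with _ | k
      · simp
      · simp only [if_true, List.getElem_cons_succ, List.getElem_map, beq_self_eq_true]
        simp only [if_true, List.length_cons, List.length_map] at hk
        have := @ih k t (by omega); omega
    · simp only [hab, if_false, List.getElem_map, beq_iff_eq]
      simp only [hab, if_false, List.length_map] at hk
      have := @ih k t hk; omega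

lemma mem_occPos {w : List Bool} {b : Bool} {j : ℕ} :
    j ∈ occPos w b ↔ j < w.length ∧ w.getD j (!b) = b := by
  simp [occPos]

lemma count_take_add_one_of_getD {w : List Bool} {b : Bool} {j : ℕ} (hj : j < w.length)
    (h : w.getD j (!b) = b) : (w.take (j + 1)).count b = (w.take j).count b + 1 := by
  rw [List.getD_eq_getElem _ _ hj] at h
  simp [List.take_add_one, List.getElem?_eq_getElem hj, h]

section occ

variable {w : List Bool} {b : Bool} {k : ℕ}

lemma occ_eq_getElem (hk : k < w.count b) :
    occ w b k = (occPos w b)[k]'(by rwa [length_occPos]) :=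
  List.getD_eq_getElem _ _ _

lemma occ_mem_occPos (hk : k < w.count b) : occ w b k ∈ occPos w b := by
  rw [occ_eq_getElem hk]; exact List.getElem_mem _

lemma occ_lt_iff (hk : k < w.count b) {t : ℕ} : occ w b k < t ↔ k < (w.take t).count b := by
  rw [occ_eq_getElem hk]; exact occPos_getElem_lt_iff _

lemma count_take_occ (hk : k < w.count b) : (w.take (occ w b k)).count b = k := by
  obtain ⟨hlt, hb⟩ := mem_occPos.1 (occ_mem_occPos hk)
  have hle := (occ_lt_iff hk).not.1 (lt_irrefl _)
  have hgt := (occ_lt_iff hk).1 (Nat.lt_succ_self _)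
  rw [count_take_add_one_of_getD hlt hb] at hgt
  omega

lemma occ_lt_occ {i : ℕ} (hik : i < k) (hk : k < w.count b) : occ w b i < occ w b k :=
  (occ_lt_iff (hik.trans hk)).2 (by rwa [count_take_occ hk])

lemma exists_occ_eq_of_mem {j : ℕ} (hj : j ∈ occPos w b) : ∃ k < w.count b, occ w b k = j := by
  obtain ⟨k, hk, rfl⟩ := List.mem_iff_getElem.1 hj
  rw [length_occPos] at hk
  exact ⟨k, hk, occ_eq_getElem hk⟩

lemma getD_occ (hk : k < w.count b) (d : Bool) :
    w.getD (occ w b k) d = b := by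
  obtain ⟨hlt, hb⟩ := mem_occPos.1 (occ_mem_occPos hk)
  rwa [List.getD_eq_getElem _ _ hlt] at hb ⊢

lemma occ_lt_length (hk : k < w.count b) :
    occ w b k < w.length :=
  (mem_occPos.1 (occ_mem_occPos hk)).1

end occ

def pairedPositions (w : List Bool) (i : ℕ) : List ℕ :=
  (List.range w.length).filter fun j =>
    [occ w true (i - 1), occ w true i, occ w false (i - 1), occ w false i].contains j

lemma pairedSubword_eq_map (w : List Bool) (i : ℕ) :
    pairedSubword w i = (pairedPositions w i).map (w.getD · true) :=
  rfl

lemma pairedSubword_eq_iff {w : List Bool} {b : Bool} {i : ℕ} (hi : 1 ≤ i)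
    (hb : i < w.count b) (hnb : i < w.count (!b)) :
    pairedSubword w i = [b, b, !b, !b] ↔ occ w b i < occ w (!b) (i - 1) := by
  have hb' : i - 1 < w.count b := by omega
  have hnb' : i - 1 < w.count (!b) := by omega
  set e₀ := occ w b (i - 1)
  set e₁ := occ w b i
  set f₀ := occ w (!b) (i - 1)
  set f₁ := occ w (!b) i
  have hmem : ∀ x, x ∈ pairedPositions w i ↔ x ∈ [e₀, e₁, f₀, f₁] := by
    intro x
    simp only [pairedPositions, List.mem_filter, List.mem_range, List.contains_iff_mem]
    have hkeep : x ∈ [occ w true (i - 1), occ w true i, occ w false (i - 1), occ w false i]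
        ↔ x ∈ [e₀, e₁, f₀, f₁] := by
      cases b
      · simp only [e₀, e₁, f₀, f₁, List.mem_cons, List.not_mem_nil, Bool.not_false]
        tauto
      · exact Iff.rfl
    have hlen : ∀ x ∈ [e₀, e₁, f₀, f₁], x < w.length := by
      simp [e₀, e₁, f₀, f₁, occ_lt_length, hb, hb', hnb, hnb']
    rw [hkeep]
    exact ⟨And.right, fun hx => ⟨hlen x hx, hx⟩⟩
  rw [pairedSubword_eq_map]
  constructor
  · intro h
    exact (List.pairwise_lt_range.filter _).rel_of_map_eq_append (u := [b, b]) (v := [!b, !b]) h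
      ((hmem e₁).2 (by simp)) ((hmem f₀).2 (by simp))
      (by rw [getD_occ hb]; cases b <;> decide) (by rw [getD_occ hnb']; cases b <;> decide)
  · intro h
    have hsorted : [e₀, e₁, f₀, f₁].Pairwise (· < ·) := by
      have := occ_lt_occ (Nat.sub_lt hi one_pos) hb
      have := occ_lt_occ (Nat.sub_lt hi one_pos) hnb
      simp only [List.pairwise_cons, List.forall_mem_cons, List.not_mem_nil, IsEmpty.forall_iff,
        implies_true, List.Pairwise.nil, and_true]
      omega
    rw [pairedPositions, List.range_filter_eq_of_pairwise hsorted fun x => by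
      rw [← hmem, pairedPositions, List.mem_filter, List.mem_range]]
    simp only [List.map_cons, List.map_nil, e₀, e₁, f₀, f₁, getD_occ hb, getD_occ hb',
      getD_occ hnb, getD_occ hnb']

def excessSteps (w : List Bool) (b : Bool) : Finset ℕ :=
  (Finset.range w.length).filter (fun j =>
    w.getD j (!b) = b ∧ (w.take (j + 1)).count (!b) + 2 ≤ (w.take (j + 1)).count b)

lemma occ_mem_excessSteps_iff {w : List Bool} {b : Bool} {k : ℕ} (hk : k < w.count b)
    (hk' : k ≤ w.count (!b)) :
    occ w b k ∈ excessSteps w b ↔ 1 ≤ k ∧ occ w b k < occ w (!b) (k - 1) := by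
  simp only [excessSteps, Finset.mem_filter, Finset.mem_range, occ_lt_length hk, getD_occ hk,
    count_take_add_one_of_getD (occ_lt_length hk) (getD_occ hk _), count_take_occ hk, true_and]
  rcases Nat.eq_zero_or_pos k with rfl | hpos
  · omega
  · have := occ_lt_iff (w := w) (b := !b) (k := k - 1) (t := occ w b k + 1) (by omega)
    omega

theorem pmch_eq_card_excessSteps {n : ℕ} {w : List Bool} (hw : memL n w) (b : Bool) :
    pmch n [b, b, !b, !b] w = (excessSteps w b).card := by
  have hb : w.count b = n := by cases b; exacts [hw.2, hw.1]
  have hnb : w.count (!b) = n := by cases b; exacts [hw.1, hw.2]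
  have hmatch : ∀ k < n, (1 ≤ k ∧ pairedSubword w k = [b, b, !b, !b]) ↔
      occ w b k ∈ excessSteps w b := by
    intro k hk
    rw [occ_mem_excessSteps_iff (by omega) (by omega)]
    exact and_congr_right fun h1 => pairedSubword_eq_iff h1 (by omega) (by omega)
  have hocc : ∀ j ∈ excessSteps w b, ∃ k < n, occ w b k = j := by
    intro j hj
    simp only [excessSteps, Finset.mem_filter, Finset.mem_range] at hj
    rw [← hb]
    exact exists_occ_eq_of_mem (mem_occPos.2 ⟨hj.1, hj.2.1⟩)
  unfold pmch
  apply Finset.card_nbij' (occ w b) (fun j => (w.take j).count b)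
  · intro i hi
    simp only [Finset.coe_filter, Finset.mem_Icc, Set.mem_ofPred_eq] at hi
    exact (hmatch i (by omega)).1 ⟨hi.1.1, hi.2⟩
  · intro j hj
    obtain ⟨k, hk, rfl⟩ := hocc j hj
    obtain ⟨h1, h⟩ := (hmatch k hk).2 hj
    simp only [Finset.coe_filter, Finset.mem_Icc, Set.mem_ofPred_eq, count_take_occ (hb ▸ hk)]
    exact ⟨⟨h1, by omega⟩, h⟩
  · intro i hi
    simp only [Finset.coe_filter, Finset.mem_Icc, Set.mem_ofPred_eq] at hi
    exact count_take_occ (by omega)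
  · intro j hj
    obtain ⟨k, hk, rfl⟩ := hocc j hj
    simp only [count_take_occ (hb ▸ hk)]

theorem P1_matches_eq_east_steps_below_subdiagonal_general
    (n : ℕ) (w : List Bool) (hw : memL n w) :
    pmch n P1 w = eastBelow w ∧ pmch n P6 w = northAbove w :=
  ⟨pmch_eq_card_excessSteps hw true, pmch_eq_card_excessSteps hw false⟩

theorem P1_matches_eq_east_steps_below_subdiagonal
    (n : ℕ) (hn : 1 ≤ n) (w : List Bool) (hw : memL n w) :
    pmch n P1 w = eastBelow w ∧ pmch n P6 w = northAbove w :=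
  P1_matches_eq_east_steps_below_subdiagonal_general n w hw
end

section
/- Let n ≥ 1 and L = w_1⋯w_{2n} ∈ 𝓛_n. Then the number of P2-matches in L equals bounce⁻(L), the number of indices i with 1 ≤ i ≤ n−1 such that w_1⋯w_{2i} contains exactly i E's and i N's, w_{2i} = N, and w_{2i+1} = E (points [i,i] on the path preceded by a north step and followed by an east step). By symmetry, the number of P5-matches in L equals bounce⁺(L), the number of indices i with 1 ≤ i ≤ n−1 such that w_1⋯w_{2i} contains exactly i E's and i N's, w_{2i} = E, and w_{2i+1} = N. -/
/-- The path of `w` passes through the interior diagonal point `[i,i]`: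
the prefix `w_1 ⋯ w_{2i}` contains exactly `i` `E`'s and `i` `N`'s. -/
abbrev onDiag (w : List Bool) (i : ℕ) : Prop :=
  (w.take (2*i)).count true = i ∧ (w.take (2*i)).count false = i

/-- `bounce⁻(w)`: the number of interior diagonal points of the path preceded by a
north step and followed by an east step. -/
def bounceMinus (n : ℕ) (w : List Bool) : ℕ :=
  ((Finset.Icc 1 (n-1)).filter (fun i =>
    onDiag w i ∧ w.getD (2*i-1) true = false ∧ w.getD (2*i) false = true)).card

/-- `bounce⁺(w)`: the number of interior diagonal points of the path preceded by an
east step and followed by a north step. -/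
def bouncePlus (n : ℕ) (w : List Bool) : ℕ :=
  ((Finset.Icc 1 (n-1)).filter (fun i =>
    onDiag w i ∧ w.getD (2*i-1) false = true ∧ w.getD (2*i) true = false)).card

/-!
Let `a < b` be the positions (counted from `0`) of the `i`-th and `(i+1)`-th occurrences of `E`
in `w`, and `c < d` those of `N`. The paired subword at `i` is `ENEN` exactly when they
interleave as `a < c < b < d`. Counting the letters before `c` and before `b` shows that this
happens exactly when `c = 2i - 1` and `b = 2i`, i.e. when the path passes through `[i,i]` with a
north step followed by an east step. Exchanging `E` and `N` gives the statement for `NENE` and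
`bounce⁺`.
-/

open Nat (nth count)

def OccAt {α : Type*} (w : List α) (b : α) (j : ℕ) : Prop := w[j]? = some b

instance {α : Type*} [DecidableEq α] (w : List α) (b : α) : DecidablePred (OccAt w b) :=
  fun j => inferInstanceAs (Decidable (w[j]? = some b))

section OccAt

variable {α : Type*} {w : List α} {b : α} {j k l : ℕ}

theorem OccAt.lt_length (h : OccAt w b j) : j < w.length :=
  (List.getElem?_eq_some_iff.1 h).1

theorem OccAt.getD_eq (h : OccAt w b j) (d : α) : w.getD j d = b := by
  rw [List.getD_eq_getElem?_getD, h, Option.getD_some]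

theorem finite_occAt (w : List α) (b : α) : (Set.ofPred (OccAt w b)).Finite :=
  (Set.finite_Iio w.length).subset fun _ => OccAt.lt_length

variable [DecidableEq α]

theorem count_take_eq_count_occAt (w : List α) (b : α) (m : ℕ) :
    (w.take m).count b = count (OccAt w b) m := by
  induction m with
  | zero => simp
  | succ m ih =>
    rw [List.take_add_one, List.count_append, ih, Nat.count_succ]
    cases h : w[m]? <;> simp [OccAt, h, List.count_cons]

theorem count_occAt_length (w : List α) (b : α) : count (OccAt w b) w.length = w.count b := by
  rw [← count_take_eq_count_occAt, List.take_length]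

theorem lt_card_occAt_of_lt_count (hk : k < w.count b) :
    ∀ hf : (Set.ofPred (OccAt w b)).Finite, k < hf.toFinset.card := fun hf =>
  (count_occAt_length w b ▸ hk).trans_le (Nat.count_le_card hf _)

theorem occAt_nth (hk : k < w.count b) : OccAt w b (nth (OccAt w b) k) :=
  Nat.nth_mem k (lt_card_occAt_of_lt_count hk)

theorem count_nth_occAt (hk : k < w.count b) : count (OccAt w b) (nth (OccAt w b) k) = k :=
  Nat.count_nth (lt_card_occAt_of_lt_count hk)

theorem nth_occAt_lt_nth_occAt (hkl : k < l) (hl : l < w.count b) :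
    nth (OccAt w b) k < nth (OccAt w b) l :=
  Nat.nth_lt_nth' hkl (lt_card_occAt_of_lt_count hl)

theorem nth_occAt_eq_iff {p : ℕ} (hk : k < w.count b) :
    nth (OccAt w b) k = p ↔ OccAt w b p ∧ count (OccAt w b) p = k :=
  ⟨by rintro rfl; exact ⟨occAt_nth hk, count_nth_occAt hk⟩,
    fun ⟨hp, hc⟩ => hc ▸ Nat.nth_count hp⟩

theorem nth_occAt_ne_nth_occAt {b' : α} (hbb' : b ≠ b') (hk : k < w.count b)
    (hl : l < w.count b') : nth (OccAt w b) k ≠ nth (OccAt w b') l := fun h =>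
  hbb' (Option.some_injective _ ((occAt_nth hk).symm.trans (h ▸ occAt_nth hl)))

end OccAt

section Bool

variable {w : List Bool} {b : Bool} {j k : ℕ}

theorem getD_not_eq_iff_occAt : w.getD j (!b) = b ↔ OccAt w b j := by
  rcases lt_or_ge j w.length with h | h
  · simp [OccAt, List.getElem?_eq_getElem h]
  · simp [OccAt, List.getElem?_eq_none h]

theorem mem_occPos_s1 : j ∈ occPos w b ↔ OccAt w b j := by
  simp only [occPos, List.mem_filter, List.mem_range, beq_iff_eq, getD_not_eq_iff_occAt]
  exact and_iff_right_of_imp OccAt.lt_length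

theorem getD_occPos_eq_nth : (occPos w b).getD k 0 = nth (OccAt w b) k := by
  have hset : (finite_occAt w b).toFinset = (occPos w b).toFinset := by
    ext j
    rw [Set.Finite.mem_toFinset, List.mem_toFinset]
    exact mem_occPos_s1.symm
  have hsort : (occPos w b).toFinset.sort = occPos w b :=
    (List.toFinset_sort _ (List.nodup_range.filter _)).2
      ((List.pairwise_lt_range.filter _).imp le_of_lt)
  rw [Nat.nth_eq_getD_sort (finite_occAt w b), hset, hsort]

theorem count_occAt_add_count_occAt_not (h : k ≤ w.length) :
    count (OccAt w b) k + count (OccAt w (!b)) k = k := by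
  rw [← count_take_eq_count_occAt, ← count_take_eq_count_occAt, List.count_add_count_not,
    List.length_take_of_le h]

end Bool

theorem List.filter_range_eq_of_mem_iff {L : ℕ} {p : ℕ → Bool} {ys : List ℕ}
    (hys : ys.Pairwise (· < ·)) (hL : ∀ y ∈ ys, y < L) (hp : ∀ j, p j ↔ j ∈ ys) :
    (List.range L).filter p = ys :=
  (List.pairwise_lt_range.filter _).eq_of_mem_iff hys fun j => by
    simp only [List.mem_filter, List.mem_range, hp]
    exact ⟨And.right, fun h => ⟨hL j h, h⟩⟩

section PairedSubword

variable {w : List Bool} {x : Bool} {i : ℕ}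

theorem pairedSubword_eq_of_lt (hx : i < w.count x) (hnx : i < w.count (!x))
    {y₁ y₂ y₃ y₄ : ℕ} (h₁₂ : y₁ < y₂) (h₂₃ : y₂ < y₃) (h₃₄ : y₃ < y₄)
    (hy : ∀ j, (j = y₁ ∨ j = y₂ ∨ j = y₃ ∨ j = y₄) ↔
      (j = nth (OccAt w x) (i - 1) ∨ j = nth (OccAt w x) i ∨
        j = nth (OccAt w (!x)) (i - 1) ∨ j = nth (OccAt w (!x)) i)) :
    pairedSubword w i = [w.getD y₁ true, w.getD y₂ true, w.getD y₃ true, w.getD y₄ true] := by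
  have hL : ∀ j, (j = y₁ ∨ j = y₂ ∨ j = y₃ ∨ j = y₄) → j < w.length := by
    intro j hj
    rcases (hy j).1 hj with rfl | rfl | rfl | rfl
    all_goals refine (occAt_nth ?_).lt_length
    all_goals omega
  unfold pairedSubword
  simp only [getD_occPos_eq_nth]
  rw [List.filter_range_eq_of_mem_iff (ys := [y₁, y₂, y₃, y₄])]
  · rfl
  · simp only [List.pairwise_cons, List.mem_cons, List.not_mem_nil, or_false, forall_eq_or_imp,
      forall_eq, IsEmpty.forall_iff, implies_true, List.Pairwise.nil, and_self, and_true]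
    omega
  · simpa using hL
  · intro j
    simp only [List.contains_eq_mem, decide_eq_true_eq, List.mem_cons, List.not_mem_nil,
      or_false, hy]
    cases x
    · simp only [Bool.not_false]
      tauto
    · simp only [Bool.not_true]

theorem pairedSubword_eq_iff_interleaved (hi : 1 ≤ i) (hx : i < w.count x)
    (hnx : i < w.count (!x)) :
    pairedSubword w i = [x, !x, x, !x] ↔
      nth (OccAt w x) (i - 1) < nth (OccAt w (!x)) (i - 1) ∧
        nth (OccAt w (!x)) (i - 1) < nth (OccAt w x) i ∧
        nth (OccAt w x) i < nth (OccAt w (!x)) i := by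
  set a := nth (OccAt w x) (i - 1)
  set b := nth (OccAt w x) i
  set c := nth (OccAt w (!x)) (i - 1)
  set d := nth (OccAt w (!x)) i
  have ha : w.getD a true = x := OccAt.getD_eq (occAt_nth (by omega)) _
  have hb : w.getD b true = x := OccAt.getD_eq (occAt_nth hx) _
  have hc : w.getD c true = !x := OccAt.getD_eq (occAt_nth (by omega)) _
  have hd : w.getD d true = !x := OccAt.getD_eq (occAt_nth hnx) _
  have hab : a < b := nth_occAt_lt_nth_occAt (by omega) hx
  have hcd : c < d := nth_occAt_lt_nth_occAt (by omega) hnx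
  have hac : a ≠ c := nth_occAt_ne_nth_occAt (Bool.not_ne_self x).symm (by omega) (by omega)
  have had : a ≠ d := nth_occAt_ne_nth_occAt (Bool.not_ne_self x).symm (by omega) hnx
  have hbc : b ≠ c := nth_occAt_ne_nth_occAt (Bool.not_ne_self x).symm hx (by omega)
  have hbd : b ≠ d := nth_occAt_ne_nth_occAt (Bool.not_ne_self x).symm hx hnx
  constructor
  · intro hpat
    by_contra hbad
    have : (a < b ∧ b < c ∧ c < d) ∨ (a < c ∧ c < d ∧ d < b) ∨ (c < a ∧ a < b ∧ b < d) ∨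
        (c < a ∧ a < d ∧ d < b) ∨ (c < d ∧ d < a ∧ a < b) := by omega
    rcases this with ⟨h₁, h₂, h₃⟩ | ⟨h₁, h₂, h₃⟩ | ⟨h₁, h₂, h₃⟩ | ⟨h₁, h₂, h₃⟩ | ⟨h₁, h₂, h₃⟩ <;>
      rw [pairedSubword_eq_of_lt hx hnx h₁ h₂ h₃ (by omega), ha, hb, hc, hd] at hpat <;>
      simp at hpat
  · rintro ⟨h₁, h₂, h₃⟩
    rw [pairedSubword_eq_of_lt hx hnx h₁ h₂ h₃ (by omega), ha, hb, hc, hd]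

end PairedSubword

section Diagonal

variable {w : List Bool} {x : Bool} {i : ℕ}

theorem onDiag_iff_count_take : onDiag w i ↔
    (w.take (2 * i)).count x = i ∧ (w.take (2 * i)).count (!x) = i := by
  cases x
  · exact and_comm
  · exact Iff.rfl

theorem interleaved_iff_nth_eq (hi : 1 ≤ i) (hx : i < w.count x) (hnx : i < w.count (!x)) :
    (nth (OccAt w x) (i - 1) < nth (OccAt w (!x)) (i - 1) ∧
        nth (OccAt w (!x)) (i - 1) < nth (OccAt w x) i ∧
        nth (OccAt w x) i < nth (OccAt w (!x)) i) ↔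
      nth (OccAt w (!x)) (i - 1) = 2 * i - 1 ∧ nth (OccAt w x) i = 2 * i := by
  set a := nth (OccAt w x) (i - 1)
  set b := nth (OccAt w x) i
  set c := nth (OccAt w (!x)) (i - 1)
  set d := nth (OccAt w (!x)) i
  have hca : count (OccAt w x) a = i - 1 := count_nth_occAt (by omega)
  have hcb : count (OccAt w x) b = i := count_nth_occAt hx
  have hcc : count (OccAt w (!x)) c = i - 1 := count_nth_occAt (by omega)
  have hcd : count (OccAt w (!x)) d = i := count_nth_occAt hnx
  have hbL : b < w.length := (occAt_nth hx).lt_length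
  constructor
  · rintro ⟨hac, hcb', hbd⟩
    have hxc₁ : count (OccAt w x) a < count (OccAt w x) c :=
      Nat.count_strict_mono (occAt_nth (by omega)) hac
    have hxc₂ : count (OccAt w x) c ≤ count (OccAt w x) b := Nat.count_monotone _ hcb'.le
    have hnxb₁ : count (OccAt w (!x)) c < count (OccAt w (!x)) b :=
      Nat.count_strict_mono (occAt_nth (by omega)) hcb'
    have hnxb₂ : count (OccAt w (!x)) b ≤ count (OccAt w (!x)) d := Nat.count_monotone _ hbd.le
    have hsumc : count (OccAt w x) c + count (OccAt w (!x)) c = c :=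
      count_occAt_add_count_occAt_not (by omega)
    have hsumb : count (OccAt w x) b + count (OccAt w (!x)) b = b :=
      count_occAt_add_count_occAt_not hbL.le
    omega
  · rintro ⟨hc, hb⟩
    have hab : a < b := nth_occAt_lt_nth_occAt (by omega) hx
    have hcd' : c < d := nth_occAt_lt_nth_occAt (by omega) hnx
    have hac : a ≠ c := nth_occAt_ne_nth_occAt (Bool.not_ne_self x).symm (by omega) (by omega)
    have hbd : b ≠ d := nth_occAt_ne_nth_occAt (Bool.not_ne_self x).symm hx hnx
    omega

theorem nth_eq_iff_onDiag (hi : 1 ≤ i) (hx : i < w.count x) (hnx : i < w.count (!x)) :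
    (nth (OccAt w (!x)) (i - 1) = 2 * i - 1 ∧ nth (OccAt w x) i = 2 * i) ↔
      onDiag w i ∧ w.getD (2 * i - 1) x = !x ∧ w.getD (2 * i) (!x) = x := by
  have hgetD : w.getD (2 * i - 1) x = !x ↔ OccAt w (!x) (2 * i - 1) := by
    simpa only [Bool.not_not] using getD_not_eq_iff_occAt (b := !x)
  rw [nth_occAt_eq_iff (by omega), nth_occAt_eq_iff hx, onDiag_iff_count_take (x := x), hgetD,
    getD_not_eq_iff_occAt, count_take_eq_count_occAt, count_take_eq_count_occAt]
  have hsucc : count (OccAt w (!x)) (2 * i) =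
      count (OccAt w (!x)) (2 * i - 1) + if OccAt w (!x) (2 * i - 1) then 1 else 0 := by
    rw [← Nat.count_succ, Nat.sub_add_cancel (by omega)]
  constructor
  · rintro ⟨⟨hQ, hcQ⟩, hP, hcP⟩
    have := count_occAt_add_count_occAt_not (b := x) hP.lt_length.le
    rw [if_pos hQ] at hsucc
    exact ⟨⟨hcP, by omega⟩, hQ, hP⟩
  · rintro ⟨⟨hcP, hcQ⟩, hQ, hP⟩
    rw [if_pos hQ] at hsucc
    exact ⟨⟨hQ, by omega⟩, hP, hcP⟩

theorem pairedSubword_eq_iff_onDiag (hi : 1 ≤ i) (hx : i < w.count x) (hnx : i < w.count (!x)) :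
    pairedSubword w i = [x, !x, x, !x] ↔
      onDiag w i ∧ w.getD (2 * i - 1) x = !x ∧ w.getD (2 * i) (!x) = x := by
  rw [pairedSubword_eq_iff_interleaved hi hx hnx, interleaved_iff_nth_eq hi hx hnx,
    nth_eq_iff_onDiag hi hx hnx]

end Diagonal

theorem P2_matches_eq_bounceMinus_general
    (n : ℕ) (w : List Bool) (hw : memL n w) :
    pmch n P2 w = bounceMinus n w ∧ pmch n P5 w = bouncePlus n w := by
  obtain ⟨hT, hF⟩ := hw
  have key (x : Bool) (hx : w.count x = n) (hnx : w.count (!x) = n) :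
      ∀ i ∈ Finset.Icc 1 (n - 1), pairedSubword w i = [x, !x, x, !x] ↔
        onDiag w i ∧ w.getD (2 * i - 1) x = !x ∧ w.getD (2 * i) (!x) = x := by
    intro i hi
    rw [Finset.mem_Icc] at hi
    exact pairedSubword_eq_iff_onDiag hi.1 (by omega) (by omega)
  exact ⟨congrArg Finset.card (Finset.filter_congr (key true hT hF)),
    congrArg Finset.card (Finset.filter_congr (key false hF hT))⟩

theorem P2_matches_eq_bounceMinus
    (n : ℕ) (hn : 1 ≤ n) (w : List Bool) (hw : memL n w) :
    pmch n P2 w = bounceMinus n w ∧ pmch n P5 w = bouncePlus n w :=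
  P2_matches_eq_bounceMinus_general n w hw
end

section
/- For every n ≥ 1 and every k ≥ 0, the number of words L ∈ 𝓛_n that cross the diagonal exactly k times equals the number of words L ∈ 𝓛_n that bounce off the diagonal exactly k times. -/
/-- The number of crossings of the diagonal: interior diagonal points `[i,i]` with
`w_{2i} = w_{2i+1}`. -/
def crossCount (n : ℕ) (w : List Bool) : ℕ :=
  ((Finset.Icc 1 (n-1)).filter (fun i =>
    onDiag w i ∧ w.getD (2*i-1) false = w.getD (2*i) false)).card

/-- The number of bounces off the diagonal: interior diagonal points `[i,i]` with
`w_{2i} ≠ w_{2i+1}`. -/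
def bounceCount (n : ℕ) (w : List Bool) : ℕ :=
  ((Finset.Icc 1 (n-1)).filter (fun i =>
    onDiag w i ∧ w.getD (2*i-1) false ≠ w.getD (2*i) false)).card

/-!
Reflect the path in the diagonal on every other excursion between consecutive visits to
the diagonal, starting with the second one. The reflected path visits the diagonal at the
same points, so this is an involution of `𝓛_n` (step `p + 1` is reflected iff an odd number
of visits occur among the first `p` steps), and at each visit exactly one of the two
adjacent steps is flipped: crossings and bounces are exchanged.
-/

def height (w : List Bool) (m : ℕ) : ℤ :=
  (w.take m).count true - (w.take m).count false

def oddVisits (w : List Bool) : ℕ → Bool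
  | 0 => false
  | m + 1 => xor (oddVisits w m) (decide (height w (m + 1) = 0))

def reflectAlternate (w : List Bool) : List Bool :=
  w.mapIdx fun p b => xor (oddVisits w p) b

@[simp]
theorem length_reflectAlternate (w : List Bool) : (reflectAlternate w).length = w.length := by
  simp [reflectAlternate]

theorem getElem_reflectAlternate (w : List Bool) {p : ℕ} (hp : p < (reflectAlternate w).length) :
    (reflectAlternate w)[p] = xor (oddVisits w p) (w[p]'(by simpa using hp)) := by
  simp [reflectAlternate]

theorem getD_reflectAlternate {w : List Bool} {p : ℕ} (hp : p < w.length) (d : Bool) :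
    (reflectAlternate w).getD p d = xor (oddVisits w p) (w.getD p d) := by
  rw [List.getD_eq_getElem _ _ (by simpa using hp), List.getD_eq_getElem _ _ hp,
    getElem_reflectAlternate]

theorem height_eq_zero_iff {w : List Bool} {m : ℕ} :
    height w m = 0 ↔ (w.take m).count true = (w.take m).count false := by
  rw [height, sub_eq_zero, Nat.cast_inj]

theorem height_succ_of_lt {w : List Bool} {m : ℕ} (hm : m < w.length) :
    height w (m + 1) = height w m + if w[m] then 1 else -1 := by
  rw [height, height, List.take_add_one, List.getElem?_eq_getElem hm]
  cases w[m] <;> simp <;> ring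

theorem height_succ_of_le {w : List Bool} {m : ℕ} (hm : w.length ≤ m) :
    height w (m + 1) = height w m := by
  rw [height, height, List.take_of_length_le hm, List.take_of_length_le (by omega)]

theorem height_reflectAlternate (w : List Bool) (m : ℕ) :
    height (reflectAlternate w) m = if oddVisits w m then -height w m else height w m := by
  induction m with
  | zero => simp [height, oddVisits]
  | succ m ih =>
    rcases lt_or_ge m w.length with hm | hm
    · rw [height_succ_of_lt (by simpa using hm), ih, getElem_reflectAlternate, oddVisits,
        height_succ_of_lt hm]
      -- at a visit the parity toggles, harmlessly since the height there is `0`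
      cases oddVisits w m <;> cases w[m] <;>
        simp only [Bool.false_xor, Bool.true_xor, Bool.not_false, Bool.not_true,
          Bool.false_eq_true, Bool.not_eq_true', decide_eq_true_eq, decide_eq_false_iff_not,
          if_true, if_false] <;>
        split_ifs <;> omega
    · rw [height_succ_of_le (by simpa using hm), ih, oddVisits, height_succ_of_le hm]
      by_cases hz : height w m = 0 <;> simp [hz]

theorem height_reflectAlternate_eq_zero_iff {w : List Bool} {m : ℕ} :
    height (reflectAlternate w) m = 0 ↔ height w m = 0 := by
  rw [height_reflectAlternate]
  split_ifs <;> simp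

theorem oddVisits_reflectAlternate (w : List Bool) :
    oddVisits (reflectAlternate w) = oddVisits w := by
  funext m
  induction m with
  | zero => rfl
  | succ m ih => simp only [oddVisits, ih, height_reflectAlternate_eq_zero_iff]

theorem reflectAlternate_involutive : Function.Involutive reflectAlternate := by
  intro w
  refine List.ext_getElem (by simp) fun p h _ => ?_
  simp [getElem_reflectAlternate, oddVisits_reflectAlternate]

theorem count_eq_and_count_eq_iff (l : List Bool) (i : ℕ) :
    l.count true = i ∧ l.count false = i ↔ l.length = 2 * i ∧ l.count true = l.count false := by
  have := List.count_true_add_count_false l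
  omega

theorem memL_iff_height_eq_zero {n : ℕ} {w : List Bool} :
    memL n w ↔ w.length = 2 * n ∧ height w w.length = 0 := by
  rw [memL, count_eq_and_count_eq_iff, height_eq_zero_iff, List.take_length]

theorem onDiag_iff_height_eq_zero {w : List Bool} {i : ℕ} (hi : 2 * i ≤ w.length) :
    onDiag w i ↔ height w (2 * i) = 0 := by
  rw [onDiag, count_eq_and_count_eq_iff, height_eq_zero_iff, List.length_take_of_le hi,
    eq_self_iff_true, true_and]

theorem memL_reflectAlternate_iff {n : ℕ} {w : List Bool} :
    memL n (reflectAlternate w) ↔ memL n w := by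
  rw [memL_iff_height_eq_zero, memL_iff_height_eq_zero, length_reflectAlternate,
    height_reflectAlternate_eq_zero_iff]

theorem onDiag_reflectAlternate_iff {w : List Bool} {i : ℕ} (hi : 2 * i ≤ w.length) :
    onDiag (reflectAlternate w) i ↔ onDiag w i := by
  rw [onDiag_iff_height_eq_zero hi, onDiag_iff_height_eq_zero (by simpa using hi),
    height_reflectAlternate_eq_zero_iff]

theorem oddVisits_of_height_eq_zero {w : List Bool} {i : ℕ} (hi : 1 ≤ i)
    (hz : height w (2 * i) = 0) : oddVisits w (2 * i) = !oddVisits w (2 * i - 1) := by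
  obtain ⟨j, hj⟩ : ∃ j, 2 * i = j + 1 := ⟨2 * i - 1, by omega⟩
  rw [hj] at hz ⊢
  simp [oddVisits, hz]

theorem crossCount_reflectAlternate {n : ℕ} {w : List Bool} (hw : memL n w) :
    crossCount n (reflectAlternate w) = bounceCount n w := by
  have hlen := (memL_iff_height_eq_zero.mp hw).1
  refine congrArg Finset.card (Finset.filter_congr fun i hi => ?_)
  have hi : 1 ≤ i ∧ 2 * i < w.length := by rw [Finset.mem_Icc] at hi; omega
  rw [onDiag_reflectAlternate_iff hi.2.le]
  refine and_congr_right fun hd => ?_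
  rw [getD_reflectAlternate (by omega), getD_reflectAlternate hi.2,
    oddVisits_of_height_eq_zero hi.1 ((onDiag_iff_height_eq_zero hi.2.le).mp hd)]
  cases oddVisits w (2 * i - 1) <;> cases w.getD (2 * i - 1) false <;>
    cases w.getD (2 * i) false <;> decide

theorem count_k_crossings_eq_count_k_bounces_general (n : ℕ) (k : ℕ) :
    {w : List Bool | memL n w ∧ crossCount n w = k}.ncard
      = {w : List Bool | memL n w ∧ bounceCount n w = k}.ncard := by
  have himage : reflectAlternate '' {w | memL n w ∧ crossCount n w = k}
      = {w | memL n w ∧ bounceCount n w = k} := by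
    rw [reflectAlternate_involutive.image_eq_preimage_symm]
    ext w
    simp only [Set.mem_preimage, Set.mem_ofPred_eq, memL_reflectAlternate_iff]
    exact and_congr_right fun hw => by rw [crossCount_reflectAlternate hw]
  rw [← himage, Set.ncard_image_of_injective _ reflectAlternate_involutive.injective]

theorem count_k_crossings_eq_count_k_bounces (n : ℕ) (hn : 1 ≤ n) (k : ℕ) :
    {w : List Bool | memL n w ∧ crossCount n w = k}.ncard
      = {w : List Bool | memL n w ∧ bounceCount n w = k}.ncard :=
  count_k_crossings_eq_count_k_bounces_general n k
end

section
/- For every n ≥ 1, the number of words L ∈ 𝓛_n that bounce off the diagonal an even number of times equals 2·binom(2n−2, n−1). -/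
/-!
Cut the path at its returns to the diagonal into arcs, each lying on one side of the diagonal.
The path crosses the diagonal exactly where two consecutive arcs lie on opposite sides, so it
crosses an even number of times iff its first and last arcs lie on the same side, i.e. iff
`w₁ ≠ w₂ₙ`; there are `2·C(2n-2, n-1)` such words. Reflecting every second arc across the
diagonal is an involution of `𝓛_n` that keeps the returns and exchanges crossings with bounces.
-/

namespace DiagonalBounce

open Finset

def height (w : List Bool) (j : ℕ) : ℤ :=
  ((w.take j).count true : ℤ) - (w.take j).count false

@[simp]
lemma height_zero (w : List Bool) : height w 0 = 0 := by
  simp [height]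

lemma height_succ {w : List Bool} {j : ℕ} (h : j < w.length) :
    height w (j + 1) = height w j + if w.getD j false then 1 else -1 := by
  rw [height, height, List.take_succ_eq_append_getElem h, List.getD_eq_getElem _ _ h]
  cases w[j] <;> simp <;> ring

lemma height_eq_two_mul_count_sub {w : List Bool} {j : ℕ} (h : j ≤ w.length) :
    height w j = 2 * ((w.take j).count true : ℤ) - j := by
  have := List.count_true_add_count_false (w.take j)
  rw [List.length_take_of_le h] at this
  rw [height]; omega

lemma even_of_height_eq_zero {w : List Bool} {j : ℕ} (h : j ≤ w.length)
    (h0 : height w j = 0) : Even j :=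
  ⟨(w.take j).count true, by rw [height_eq_two_mul_count_sub h] at h0; omega⟩

lemma onDiag_iff_height_eq_zero {w : List Bool} {i : ℕ} (h : 2 * i ≤ w.length) :
    onDiag w i ↔ height w (2 * i) = 0 := by
  have := List.count_true_add_count_false (w.take (2 * i))
  rw [List.length_take_of_le h] at this
  rw [onDiag, height]; omega

lemma memL_iff_height {n : ℕ} {w : List Bool} :
    memL n w ↔ w.length = 2 * n ∧ height w (2 * n) = 0 := by
  have := List.count_true_add_count_false w
  constructor
  · rintro ⟨ht, hf⟩
    have hlen : w.length = 2 * n := by omega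
    refine ⟨hlen, ?_⟩
    rw [height, ← hlen, List.take_length]; omega
  · rintro ⟨hlen, h0⟩
    rw [height, ← hlen, List.take_length] at h0
    exact ⟨by omega, by omega⟩

theorem even_card_filter_ne_succ_iff (f : ℕ → Bool) (m : ℕ) :
    Even #{j ∈ range m | f j ≠ f (j + 1)} ↔ f 0 = f m := by
  induction m with
  | zero => simp
  | succ m ih =>
    rw [range_add_one, filter_insert]
    by_cases hm : f m = f (m + 1)
    · rw [if_neg (not_not.2 hm), ih, hm]
    · rw [if_pos hm, card_insert_of_notMem (by simp), Nat.even_add_one, ih]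
      revert hm; cases f 0 <;> cases f m <;> cases f (m + 1) <;> simp

/-- `true` iff the `j`-th step (0-indexed) lies below the diagonal; consecutive heights differ
by one, so their sum is never zero. -/
def side (w : List Bool) (j : ℕ) : Bool :=
  decide (0 < height w j + height w (j + 1))

lemma side_zero {w : List Bool} (h : w ≠ []) : side w 0 = w.getD 0 false := by
  rw [side, height_succ (List.length_pos_iff.2 h), height_zero]
  cases w.getD 0 false <;> decide

lemma side_last {w : List Bool} {m : ℕ} (hlen : w.length = m + 1) (h0 : height w (m + 1) = 0) :
    side w m = !w.getD m false := by
  have hstep := height_succ (w := w) (j := m) (by omega)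
  rw [side, h0]
  generalize w.getD m false = b at hstep ⊢
  cases b <;> simp at hstep ⊢ <;> omega

lemma side_ne_side_succ_iff {w : List Bool} {j : ℕ} (h : j + 1 < w.length) :
    side w j ≠ side w (j + 1) ↔
      height w (j + 1) = 0 ∧ w.getD j false = w.getD (j + 1) false := by
  have h1 := height_succ (w := w) (j := j) (by omega)
  have h2 := height_succ h
  rw [side, side]
  generalize w.getD j false = a at h1 ⊢
  generalize w.getD (j + 1) false = b at h2 ⊢
  cases a <;> cases b <;> simp at h1 h2 ⊢ <;> omega

lemma crossCount_eq_card_side_ne {n : ℕ} {w : List Bool} (hlen : w.length = 2 * n) :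
    crossCount n w = #{j ∈ range (2 * n - 1) | side w j ≠ side w (j + 1)} := by
  refine card_nbij' (fun i => 2 * i - 1) (fun j => (j + 1) / 2) ?_ ?_ ?_ ?_
  · intro i hi
    simp only [coe_filter, mem_Icc, Set.mem_ofPred_eq] at hi ⊢
    obtain ⟨⟨hi1, hin⟩, hdiag, heq⟩ := hi
    rw [mem_range, side_ne_side_succ_iff (by omega), Nat.sub_add_cancel (by omega),
      ← onDiag_iff_height_eq_zero (by omega)]
    exact ⟨by omega, hdiag, heq⟩
  · intro j hj
    simp only [coe_filter, mem_range, Set.mem_ofPred_eq] at hj ⊢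
    obtain ⟨hj, hside⟩ := hj
    rw [side_ne_side_succ_iff (by omega)] at hside
    obtain ⟨k, hk⟩ := even_of_height_eq_zero (by omega) hside.1
    rw [mem_Icc, onDiag_iff_height_eq_zero (by omega)]
    refine ⟨by omega, ?_, ?_⟩
    · rw [show 2 * ((j + 1) / 2) = j + 1 by omega]; exact hside.1
    · rw [show 2 * ((j + 1) / 2) - 1 = j by omega, show 2 * ((j + 1) / 2) = j + 1 by omega]
      exact hside.2
  · intro i hi
    simp only [coe_filter, mem_Icc, Set.mem_ofPred_eq] at hi
    dsimp only; omega
  · intro j hj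
    simp only [coe_filter, mem_range, Set.mem_ofPred_eq] at hj
    rw [side_ne_side_succ_iff (by omega)] at hj
    obtain ⟨k, hk⟩ := even_of_height_eq_zero (by omega) hj.2.1
    dsimp only; omega

theorem even_crossCount_iff {n : ℕ} (hn : 1 ≤ n) {w : List Bool} (hw : memL n w) :
    Even (crossCount n w) ↔ w.getD 0 false ≠ w.getD (2 * n - 1) false := by
  obtain ⟨hlen, h0⟩ := memL_iff_height.1 hw
  rw [crossCount_eq_card_side_ne hlen, even_card_filter_ne_succ_iff (side w),
    side_zero (List.ne_nil_of_length_pos (by omega)),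
    side_last (by omega) (by rwa [Nat.sub_add_cancel (by omega)])]
  cases w.getD 0 false <;> cases w.getD (2 * n - 1) false <;> simp

def returnsUpTo (w : List Bool) (j : ℕ) : ℕ :=
  #{k ∈ Ioc 0 j | height w k = 0}

lemma returnsUpTo_succ (w : List Bool) (j : ℕ) :
    returnsUpTo w (j + 1) = returnsUpTo w j + if height w (j + 1) = 0 then 1 else 0 := by
  rw [returnsUpTo, returnsUpTo, ← insert_Ioc_right_eq_Ioc_add_one (by omega), filter_insert]
  split_ifs <;> simp [card_insert_of_notMem]

def reflectAlternateArcs (w : List Bool) : List Bool :=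
  w.mapIdx fun j a => a ^^ (returnsUpTo w j).bodd

@[simp]
lemma length_reflectAlternateArcs (w : List Bool) :
    (reflectAlternateArcs w).length = w.length :=
  List.length_mapIdx

lemma getD_reflectAlternateArcs {w : List Bool} {j : ℕ} (h : j < w.length) :
    (reflectAlternateArcs w).getD j false = (w.getD j false ^^ (returnsUpTo w j).bodd) := by
  rw [List.getD_eq_getElem _ _ (by simpa using h), List.getD_eq_getElem _ _ h]
  simp only [reflectAlternateArcs, List.getElem_mapIdx]

lemma height_reflectAlternateArcs {w : List Bool} {j : ℕ} (h : j ≤ w.length) :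
    height (reflectAlternateArcs w) j =
      if (returnsUpTo w j).bodd then -height w j else height w j := by
  induction j with
  | zero => simp [returnsUpTo]
  | succ j ih =>
    have hw := height_succ (w := w) (j := j) h
    rw [height_succ (by simpa using h), ih (by omega), getD_reflectAlternateArcs h,
      returnsUpTo_succ]
    generalize w.getD j false = a at hw ⊢
    rcases hb : (returnsUpTo w j).bodd <;> by_cases h0 : height w (j + 1) = 0 <;>
      cases a <;> simp [hb, h0] at hw ⊢ <;> omega

lemma height_reflectAlternateArcs_eq_zero_iff {w : List Bool} {j : ℕ} (h : j ≤ w.length) :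
    height (reflectAlternateArcs w) j = 0 ↔ height w j = 0 := by
  rw [height_reflectAlternateArcs h]
  split_ifs <;> simp

lemma returnsUpTo_reflectAlternateArcs {w : List Bool} {j : ℕ} (h : j ≤ w.length) :
    returnsUpTo (reflectAlternateArcs w) j = returnsUpTo w j := by
  refine congrArg card (filter_congr fun k hk => ?_)
  exact height_reflectAlternateArcs_eq_zero_iff (by simp at hk; omega)

theorem reflectAlternateArcs_involutive : Function.Involutive reflectAlternateArcs := by
  intro w
  refine List.ext_getElem (by simp) fun j h _ => ?_
  have hj : j < w.length := by simpa using h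
  rw [← List.getD_eq_getElem _ false, ← List.getD_eq_getElem _ false hj,
    getD_reflectAlternateArcs (by simpa using hj), getD_reflectAlternateArcs hj,
    returnsUpTo_reflectAlternateArcs hj.le, Bool.xor_assoc, Bool.xor_self, Bool.xor_false]

lemma memL_reflectAlternateArcs_iff {n : ℕ} {w : List Bool} :
    memL n (reflectAlternateArcs w) ↔ memL n w := by
  rw [memL_iff_height, memL_iff_height, length_reflectAlternateArcs]
  exact and_congr_right fun h => height_reflectAlternateArcs_eq_zero_iff h.ge

/-- At a return to the diagonal the letter after it is flipped once more than the letter before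
it, so crossings and bounces are exchanged. -/
theorem crossCount_reflectAlternateArcs {n : ℕ} {w : List Bool} (hlen : w.length = 2 * n) :
    crossCount n (reflectAlternateArcs w) = bounceCount n w := by
  refine congrArg card (filter_congr fun i hi => ?_)
  rw [mem_Icc] at hi
  have h2i : 2 * i ≤ w.length := by omega
  rw [onDiag_iff_height_eq_zero (by simpa using h2i), onDiag_iff_height_eq_zero h2i,
    height_reflectAlternateArcs_eq_zero_iff h2i]
  refine and_congr_right fun h0 => ?_
  have hret : returnsUpTo w (2 * i) = returnsUpTo w (2 * i - 1) + 1 := by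
    have := returnsUpTo_succ w (2 * i - 1)
    rwa [Nat.sub_add_cancel (by omega), if_pos h0] at this
  rw [getD_reflectAlternateArcs (by omega), getD_reflectAlternateArcs (by omega), hret,
    Nat.bodd_succ]
  cases w.getD (2 * i - 1) false <;> cases w.getD (2 * i) false <;>
    cases (returnsUpTo w (2 * i - 1)).bodd <;> decide

lemma setOf_length_succ (m : ℕ) (P : List Bool → Prop) :
    {u : List Bool | u.length = m + 1 ∧ P u} =
      List.cons true '' {v | v.length = m ∧ P (true :: v)} ∪
        List.cons false '' {v | v.length = m ∧ P (false :: v)} := by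
  ext u
  rcases u with _ | ⟨_ | _, v⟩ <;> simp

theorem ncard_length_count_true (m k : ℕ) :
    {u : List Bool | u.length = m ∧ u.count true = k}.ncard = m.choose k := by
  induction m generalizing k with
  | zero =>
    rcases k with _ | k
    · exact Set.ncard_eq_one.2 ⟨[], by ext u; simp +contextual [List.length_eq_zero_iff]⟩
    · rw [Nat.choose_zero_succ, ← Set.ncard_empty (List Bool)]
      congr 1; ext u; simp +contextual [List.length_eq_zero_iff]
  | succ m ih =>
    have hfin (P : List Bool → Prop) : {v : List Bool | v.length = m ∧ P v}.Finite :=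
      (List.finite_length_eq Bool m).subset fun v hv => hv.1
    rw [setOf_length_succ, Set.ncard_union_eq ?_ ((hfin _).image _) ((hfin _).image _),
      Set.ncard_image_of_injective _ List.cons_injective,
      Set.ncard_image_of_injective _ List.cons_injective]
    · simp only [List.count_cons_self, List.count_cons_of_ne Bool.false_ne_true, ih]
      cases k with
      | zero => simp
      | succ k => simp [ih, Nat.choose_succ_succ']
    · rw [Set.disjoint_left]
      rintro _ ⟨v, _, rfl⟩ ⟨v', _, h⟩
      simp at h

lemma getD_cons_append_singleton (a c : Bool) (u : List Bool) :
    (a :: (u ++ [c])).getD (u.length + 1) false = c := by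
  simp [List.getD_eq_getElem?_getD]

theorem ncard_memL_getD_ne {n : ℕ} (hn : 1 ≤ n) :
    {v : List Bool | memL n v ∧ v.getD 0 false ≠ v.getD (2 * n - 1) false}.ncard =
      2 * (2 * n - 2).choose (n - 1) := by
  obtain ⟨m, rfl⟩ := Nat.exists_eq_add_of_le' hn
  set A := {u : List Bool | u.length = 2 * m ∧ u.count true = m}
  have hset : {v : List Bool | memL (m + 1) v ∧ v.getD 0 false ≠ v.getD (2 * (m + 1) - 1) false}
      = (fun p : Bool × List Bool => p.1 :: (p.2 ++ [!p.1])) '' (Set.univ ×ˢ A) := by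
    ext v
    constructor
    · rintro ⟨hv, hne⟩
      have hlen := (memL_iff_height.1 hv).1
      rcases v with _ | ⟨a, v⟩
      · simp at hlen
      rcases v.eq_nil_or_concat with rfl | ⟨u, c, rfl⟩
      · simp at hlen; omega
      rw [List.concat_eq_append] at *
      have hu : u.length = 2 * m := by simp at hlen; omega
      rw [show 2 * (m + 1) - 1 = u.length + 1 by omega, getD_cons_append_singleton] at hne
      obtain rfl : c = !a := by cases a <;> cases c <;> simp_all
      refine ⟨(a, u), ⟨trivial, hu, ?_⟩, rfl⟩
      have := hv.1
      cases a <;> simp at this ⊢ <;> omega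
    · rintro ⟨⟨b, u⟩, ⟨-, hu, hc⟩, rfl⟩
      have := List.count_true_add_count_false u
      rw [Set.mem_ofPred_eq, show 2 * (m + 1) - 1 = u.length + 1 by simp at hu ⊢; omega,
        getD_cons_append_singleton]
      cases b <;> simp [memL] at hu hc ⊢ <;> omega
  have hinj : Function.Injective fun p : Bool × List Bool => p.1 :: (p.2 ++ [!p.1]) := by
    rintro ⟨a, u⟩ ⟨b, v⟩ h
    simp_all
  rw [hset, Set.ncard_image_of_injective _ hinj, Set.ncard_prod, Set.ncard_univ,
    ncard_length_count_true]
  simp [Nat.mul_add]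

end DiagonalBounce

open DiagonalBounce in
theorem count_even_bounces (n : ℕ) (hn : 1 ≤ n) :
    {w : List Bool | memL n w ∧ Even (bounceCount n w)}.ncard
      = 2 * (2*n-2).choose (n-1) := by
  have hset : {w : List Bool | memL n w ∧ Even (bounceCount n w)} = reflectAlternateArcs ''
      {v | memL n v ∧ v.getD 0 false ≠ v.getD (2 * n - 1) false} := by
    rw [reflectAlternateArcs_involutive.image_eq_preimage_symm]
    ext w
    simp only [Set.mem_ofPred_eq, Set.mem_preimage, memL_reflectAlternateArcs_iff]
    refine and_congr_right fun hw => ?_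
    rw [← even_crossCount_iff hn (memL_reflectAlternateArcs_iff.2 hw),
      crossCount_reflectAlternateArcs (memL_iff_height.1 hw).1]
  rw [hset, Set.ncard_image_of_injective _ reflectAlternateArcs_involutive.injective,
    ncard_memL_getD_ne hn]
end

section
/- For every n ≥ 1 and every k ≥ 0, the number of words L ∈ 𝓛_n that touch the diagonal with a north step exactly k times equals the number of words L ∈ 𝓛_n that cross the diagonal exactly k times. -/
/-- The number of touchings of the diagonal with a north step: interior diagonal
points `[i,i]` with `w_{2i} = N`. -/
def touchNorthCount (n : ℕ) (w : List Bool) : ℕ :=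
  ((Finset.Icc 1 (n-1)).filter (fun i =>
    onDiag w i ∧ w.getD (2*i-1) true = false)).card

/-!
Cut a path in `𝓛_n` at its returns to the diagonal into arches; complementing the letters of
some arches moves them to the other side of the diagonal and keeps every return. A return is a
north touching iff the arch before it starts with `E`, and a crossing iff the arches on both
sides of it start with different letters. So complement each arch iff an odd number of the arches
after it start with `E`: in the image, the arches around a return start with different letters
exactly when the arch before it started with `E` in the original. This map is injective, hence a
bijection of the finite set `𝓛_n` carrying north touchings to crossings.
-/

namespace LatticePath

def excess (w : List Bool) : ℤ := w.count true - w.count false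

@[simp] lemma excess_nil : excess [] = 0 := rfl

lemma excess_cons (x : Bool) (xs : List Bool) :
    excess (x :: xs) = (if x then 1 else -1) + excess xs := by
  cases x <;> simp [excess] <;> ring

lemma excess_append (u v : List Bool) : excess (u ++ v) = excess u + excess v := by
  simp only [excess, List.count_append]; push_cast; ring

/-- On a balanced word this is the parity of the number of arches starting with `E`: its returns
to the diagonal are the starting positions of its nonempty balanced suffixes. -/
def eastArchParity : List Bool → Bool
  | [] => false
  | x :: xs => (decide (excess (x :: xs) = 0) && x) ^^ eastArchParity xs

def flipArches : List Bool → List Bool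
  | [] => []
  | x :: xs => (x ^^ eastArchParity xs) :: flipArches xs

@[simp] lemma length_flipArches (w : List Bool) : (flipArches w).length = w.length := by
  induction w <;> simp [flipArches, *]

lemma drop_flipArches (w : List Bool) (j : ℕ) : (flipArches w).drop j = flipArches (w.drop j) := by
  induction w generalizing j with
  | nil => simp [flipArches]
  | cons x xs ih => cases j <;> simp [flipArches, ih]

lemma getElem_flipArches (w : List Bool) (j : ℕ) (hj : j < (flipArches w).length) :
    (flipArches w)[j] = (w[j]'(by simpa using hj) ^^ eastArchParity (w.drop (j + 1))) := by
  induction w generalizing j with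
  | nil => simp at hj
  | cons x xs ih => cases j <;> simp [flipArches, ih]

lemma excess_flipArches (w : List Bool) :
    excess (flipArches w) = if eastArchParity w then -excess w else excess w := by
  induction w with
  | nil => simp [flipArches]
  | cons x xs ih =>
    rw [flipArches, eastArchParity, excess_cons, excess_cons, ih]
    by_cases h : (if x then 1 else -1) + excess xs = 0 <;>
      cases x <;> cases eastArchParity xs <;> simp_all <;> omega

lemma excess_flipArches_eq_zero_iff (w : List Bool) :
    excess (flipArches w) = 0 ↔ excess w = 0 := by
  rw [excess_flipArches]; split <;> simp

lemma flipArches_injective : Function.Injective flipArches := by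
  intro v w h
  induction v generalizing w with
  | nil => cases w <;> simp_all [flipArches]
  | cons x xs ih =>
    cases w with
    | nil => simp [flipArches] at h
    | cons y ys =>
      simp only [flipArches, List.cons.injEq] at h
      obtain rfl := ih h.2
      simpa using h.1

lemma flipArches_getElem_pred_eq_getElem_iff (w : List Bool) (p : ℕ) (hp0 : 0 < p)
    (hp : p < (flipArches w).length) (hret : excess (w.drop p) = 0) :
    (flipArches w)[p - 1] = (flipArches w)[p] ↔ w[p - 1]'(by simp at hp; omega) = false := by
  have hpw : p < w.length := by simpa using hp
  rw [getElem_flipArches, getElem_flipArches, Nat.sub_add_cancel hp0,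
    List.drop_eq_getElem_cons hpw, eastArchParity, ← List.drop_eq_getElem_cons hpw, hret]
  cases w[p - 1] <;> cases w[p] <;> simp

lemma memL_iff (n : ℕ) (w : List Bool) : memL n w ↔ w.length = 2 * n ∧ excess w = 0 := by
  have := List.count_true_add_count_false w
  simp only [memL, excess]
  omega

lemma onDiag_iff_excess_drop_eq_zero {w : List Bool} (hw : excess w = 0) {i : ℕ}
    (hi : 2 * i ≤ w.length) : onDiag w i ↔ excess (w.drop (2 * i)) = 0 := by
  have hsplit := excess_append (w.take (2 * i)) (w.drop (2 * i))
  have hcount := List.count_true_add_count_false (w.take (2 * i))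
  rw [List.take_append_drop, hw] at hsplit
  rw [List.length_take_of_le hi] at hcount
  simp only [onDiag, excess] at hsplit ⊢
  omega

lemma memL_flipArches {n : ℕ} {w : List Bool} (hw : memL n w) : memL n (flipArches w) := by
  rw [memL_iff] at hw ⊢
  rw [length_flipArches, excess_flipArches_eq_zero_iff]
  exact hw

lemma crossCount_flipArches {n : ℕ} {w : List Bool} (hw : memL n w) :
    crossCount n (flipArches w) = touchNorthCount n w := by
  rw [memL_iff] at hw
  obtain ⟨hlen, hexc⟩ := hw
  unfold crossCount touchNorthCount
  congr 1
  refine Finset.filter_congr fun i hi => ?_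
  rw [Finset.mem_Icc] at hi
  have hi' : 2 * i < (flipArches w).length := by simp; omega
  rw [onDiag_iff_excess_drop_eq_zero ((excess_flipArches_eq_zero_iff w).2 hexc) hi'.le,
    onDiag_iff_excess_drop_eq_zero hexc (by simpa using hi'.le), drop_flipArches,
    excess_flipArches_eq_zero_iff, List.getD_eq_getElem _ _ (by omega),
    List.getD_eq_getElem _ _ hi', List.getD_eq_getElem _ _ (by simp at hi'; omega)]
  exact and_congr_right fun hret =>
    flipArches_getElem_pred_eq_getElem_iff w (2 * i) (by omega) hi' hret

end LatticePath

open LatticePath in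
theorem count_k_north_touchings_eq_count_k_crossings_general (n : ℕ) (k : ℕ) :
    {w : List Bool | memL n w ∧ touchNorthCount n w = k}.ncard
      = {w : List Bool | memL n w ∧ crossCount n w = k}.ncard := by
  have hfin : {w : List Bool | memL n w}.Finite :=
    (List.finite_length_eq Bool (2 * n)).subset fun w hw => ((memL_iff n w).1 hw).1
  have hbij : Set.BijOn flipArches {w | memL n w} {w | memL n w} :=
    (hfin.injOn_iff_bijOn_of_mapsTo fun _ => memL_flipArches).1 flipArches_injective.injOn
  have himage : flipArches '' {w | memL n w ∧ touchNorthCount n w = k}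
      = {w | memL n w ∧ crossCount n w = k} := by
    ext v
    constructor
    · rintro ⟨w, ⟨hw, rfl⟩, rfl⟩
      exact ⟨memL_flipArches hw, crossCount_flipArches hw⟩
    · rintro ⟨hv, rfl⟩
      obtain ⟨w, hw, rfl⟩ := hbij.surjOn hv
      exact ⟨w, ⟨hw, (crossCount_flipArches hw).symm⟩, rfl⟩
  rw [← himage, Set.ncard_image_of_injective _ flipArches_injective]

theorem count_k_north_touchings_eq_count_k_crossings (n : ℕ) (hn : 1 ≤ n) (k : ℕ) :
    {w : List Bool | memL n w ∧ touchNorthCount n w = k}.ncard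
      = {w : List Bool | memL n w ∧ crossCount n w = k}.ncard :=
  count_k_north_touchings_eq_count_k_crossings_general n k
end
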